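/- The linear map on the centrally extended Lie algebra 𝔡̄_t^{(n)} = 𝔡_t^{(n)} ⊕ ℂc^{(1)} ⊕ ℂc^{(2)} (with t = d^n) defined by c^{(1)} ↦ c^{(2)}, c^{(2)} ↦ −c^{(1)}, and A ⊗ D^k Z^l ↦ d^{−nk}·(−d)^{nl}·A ⊗ Z^{−k} D^{l} for all A ∈ M_n(ℂ), k,l ∈ ℤ, is an automorphism of Lie algebras; i.e., it is bijective and preserves the bracket [X + λ1 c^{(1)} + λ2 c^{(2)}, Y + μ1 c^{(1)} + μ2 c^{(2)}] = XY − YX + φ^{(1)}(X,Y)c^{(1)} + φ^{(2)}(X,Y)c^{(2)}. -/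

import Mathlib

/-- The matrix quantum torus `𝔡_t^{(n)}`, with `(k,l)` recording `D^k Z^l`. -/
abbrev DT (n : ℕ) := (ℤ × ℤ) →₀ Matrix (Fin n) (Fin n) ℂ

/-- Product of `𝔡_t^{(n)}` (from `DZ = t·ZD`). -/
noncomputable def dmul (n : ℕ) (t : ℂ) (X Y : DT n) : DT n :=
  X.sum fun p A => Y.sum fun q B =>
    Finsupp.single (p.1 + q.1, p.2 + q.2) (t ^ (-(p.2 * q.1)) • (A * B))

/-- The 2-cocycle `φ^{(1)}`. -/
noncomputable def phi1 (n : ℕ) (t : ℂ) (X Y : DT n) : ℂ :=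
  X.sum fun p A => (p.2 : ℂ) * t ^ (p.1 * p.2) * (A * Y (-p.1, -p.2)).trace

/-- The 2-cocycle `φ^{(2)}`. -/
noncomputable def phi2 (n : ℕ) (t : ℂ) (X Y : DT n) : ℂ :=
  X.sum fun p A => (p.1 : ℂ) * t ^ (p.1 * p.2) * (A * Y (-p.1, -p.2)).trace

/-- The centrally extended Lie algebra `𝔡̄_t^{(n)} = 𝔡_t^{(n)} ⊕ ℂc^{(1)} ⊕ ℂc^{(2)}`. -/
abbrev DText (n : ℕ) := DT n × ℂ × ℂ

/-- The Lie bracket of `𝔡̄_t^{(n)}`: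
`[X + λ₁c¹ + λ₂c², Y + μ₁c¹ + μ₂c²] = XY − YX + φ¹(X,Y)c¹ + φ²(X,Y)c²`. -/
noncomputable def extBr (n : ℕ) (t : ℂ) (u v : DText n) : DText n :=
  (dmul n t u.1 v.1 - dmul n t v.1 u.1, phi1 n t u.1 v.1, phi2 n t u.1 v.1)

/-- The classical limit of Miki's automorphism: `c¹ ↦ c²`, `c² ↦ −c¹`, and
`A ⊗ D^k Z^l ↦ d^{−nk}·(−d)^{nl}·A ⊗ Z^{−k}D^l`, where
`Z^{−k}D^l = (d^n)^{k·l}·D^l Z^{−k}` (with `t = d^n`). -/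
noncomputable def miki (n : ℕ) (d : ℂ) (u : DText n) : DText n :=
  (u.1.sum fun p A => Finsupp.single (p.2, -p.1)
      ((d ^ (-(n : ℤ) * p.1) * (-d) ^ ((n : ℤ) * p.2) * (d ^ (n : ℤ)) ^ (p.1 * p.2)) • A),
   -u.2.2, u.2.1)

/-!
The torus part of `miki` is the rotation `(k, l) ↦ (l, -k)` of the lattice of monomials,
twisted by `c(k, l) = t^{kl-k} f^l` with `t = d^n`, `f = (-d)^n`; the argument works for any
`t, f ≠ 0`. All maps involved are (bi)additive, so everything is checked on monomials. The product
is preserved because `c(p + q) t^{-p₂q₁} = t^{p₁q₂} c(p) c(q)`, the right side carrying the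
commutation factor of the rotated monomials. Since `c(p) c(-p) t^{-p₁p₂} = t^{p₁p₂}`, the rotation
transports the trace pairing with weight `w` to the one with weight `w ∘ rotation`, which turns
the weights `l` and `k` of `φ¹` and `φ²` into `-k` and `l`.
-/

open Finsupp

section AdditiveExt

variable {α M N : Type*} [AddCommMonoid M] [AddCommGroup N]

theorem Finsupp.additive_ext {F G : (α →₀ M) → N}
    (hF : ∀ X Y, F (X + Y) = F X + F Y) (hG : ∀ X Y, G (X + Y) = G X + G Y)
    (h : ∀ p A, F (single p A) = G (single p A)) : F = G :=
  congrArg DFunLike.coe (Finsupp.addHom_ext (f := AddMonoidHom.mk' F hF)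
    (g := AddMonoidHom.mk' G hG) h)

theorem Finsupp.biadditive_ext {F G : (α →₀ M) → (α →₀ M) → N}
    (hF₁ : ∀ X X' Y, F (X + X') Y = F X Y + F X' Y) (hF₂ : ∀ X Y Y', F X (Y + Y') = F X Y + F X Y')
    (hG₁ : ∀ X X' Y, G (X + X') Y = G X Y + G X' Y) (hG₂ : ∀ X Y Y', G X (Y + Y') = G X Y + G X Y')
    (h : ∀ p q A B, F (single p A) (single q B) = G (single p A) (single q B)) : F = G :=
  Finsupp.additive_ext (fun X X' => funext (hF₁ X X')) (fun X X' => funext (hG₁ X X'))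
    fun p A => Finsupp.additive_ext (hF₂ _) (hG₂ _) fun q B => h p q A B

end AdditiveExt

section Bilinear

variable (n : ℕ) (t : ℂ)

lemma dmul_single_single (p q : ℤ × ℤ) (A B : Matrix (Fin n) (Fin n) ℂ) :
    dmul n t (single p A) (single q B) =
      single (p.1 + q.1, p.2 + q.2) (t ^ (-(p.2 * q.1)) • (A * B)) := by
  rw [dmul, sum_single_index (by simp), sum_single_index (by simp)]

lemma dmul_add_left (X X' Y : DT n) : dmul n t (X + X') Y = dmul n t X Y + dmul n t X' Y := by
  refine sum_add_index' (fun p => by simp) fun p A A' => ?_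
  rw [← sum_add]
  exact sum_congr fun q _ => by rw [add_mul, smul_add, single_add]

lemma dmul_add_right (X Y Y' : DT n) : dmul n t X (Y + Y') = dmul n t X Y + dmul n t X Y' := by
  rw [dmul, dmul, dmul, ← sum_add]
  exact sum_congr fun p _ => sum_add_index' (fun q => by simp) fun q B B' => by
    rw [mul_add, smul_add, single_add]

noncomputable def tracePairing (w : ℤ × ℤ → ℂ) (X Y : DT n) : ℂ :=
  X.sum fun p A => w p * t ^ (p.1 * p.2) * (A * Y (-p.1, -p.2)).trace

lemma phi1_eq_tracePairing : phi1 n t = tracePairing n t fun p => (p.2 : ℂ) := rfl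

lemma phi2_eq_tracePairing : phi2 n t = tracePairing n t fun p => (p.1 : ℂ) := rfl

variable {n t}

lemma tracePairing_single_single (w : ℤ × ℤ → ℂ) (p q : ℤ × ℤ) (A B : Matrix (Fin n) (Fin n) ℂ) :
    tracePairing n t w (single p A) (single q B) =
      w p * t ^ (p.1 * p.2) * (A * single q B (-p.1, -p.2)).trace := by
  rw [tracePairing, sum_single_index (by simp)]

lemma tracePairing_add_left (w : ℤ × ℤ → ℂ) (X X' Y : DT n) :
    tracePairing n t w (X + X') Y = tracePairing n t w X Y + tracePairing n t w X' Y :=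
  sum_add_index' (fun p => by simp) fun p A A' => by
    rw [Matrix.add_mul, Matrix.trace_add, mul_add]

lemma tracePairing_add_right (w : ℤ × ℤ → ℂ) (X Y Y' : DT n) :
    tracePairing n t w X (Y + Y') = tracePairing n t w X Y + tracePairing n t w X Y' := by
  rw [tracePairing, tracePairing, tracePairing, ← sum_add]
  exact sum_congr fun p _ => by rw [Finsupp.add_apply, Matrix.mul_add, Matrix.trace_add, mul_add]

lemma tracePairing_neg (w : ℤ × ℤ → ℂ) (X Y : DT n) :
    tracePairing n t (fun p => -w p) X Y = -tracePairing n t w X Y := by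
  rw [tracePairing, tracePairing, ← sum_neg]
  exact sum_congr fun p _ => by ring

end Bilinear

section Rotation

variable {t f : ℂ}

noncomputable def rotCoeff (t f : ℂ) (p : ℤ × ℤ) : ℂ := t ^ (p.1 * p.2 - p.1) * f ^ p.2

lemma rotCoeff_ne_zero (ht : t ≠ 0) (hf : f ≠ 0) (p : ℤ × ℤ) : rotCoeff t f p ≠ 0 :=
  mul_ne_zero (zpow_ne_zero _ ht) (zpow_ne_zero _ hf)

lemma rotCoeff_add_mul (ht : t ≠ 0) (hf : f ≠ 0) (p q : ℤ × ℤ) :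
    rotCoeff t f (p.1 + q.1, p.2 + q.2) * t ^ (-(p.2 * q.1)) =
      t ^ (-(-p.1 * q.2)) * rotCoeff t f p * rotCoeff t f q := by
  simp only [rotCoeff]
  rw [show (p.1 + q.1) * (p.2 + q.2) - (p.1 + q.1) =
      -(-p.1 * q.2) + (p.1 * p.2 - p.1) + (q.1 * q.2 - q.1) - -(p.2 * q.1) by ring,
    zpow_sub₀ ht, zpow_add₀ ht, zpow_add₀ ht, zpow_add₀ hf]
  field_simp

lemma rotCoeff_mul_rotCoeff_neg (ht : t ≠ 0) (hf : f ≠ 0) (p : ℤ × ℤ) :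
    t ^ (p.2 * -p.1) * (rotCoeff t f p * rotCoeff t f (-p.1, -p.2)) = t ^ (p.1 * p.2) := by
  conv_rhs => rw [show p.1 * p.2 = p.2 * -p.1 + (p.1 * p.2 - p.1) + (-p.1 * -p.2 - -p.1) by ring,
    zpow_add₀ ht, zpow_add₀ ht]
  simp only [rotCoeff]
  rw [zpow_neg f]
  field_simp

noncomputable def rotTorus (n : ℕ) (t f : ℂ) (X : DT n) : DT n :=
  X.sum fun p A => single (p.2, -p.1) (rotCoeff t f p • A)

variable {n : ℕ}

lemma rotTorus_single (p : ℤ × ℤ) (A : Matrix (Fin n) (Fin n) ℂ) :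
    rotTorus n t f (single p A) = single (p.2, -p.1) (rotCoeff t f p • A) := by
  rw [rotTorus, sum_single_index (by simp)]

lemma rotTorus_zero : rotTorus n t f 0 = 0 := sum_zero_index

lemma rotTorus_add (X Y : DT n) : rotTorus n t f (X + Y) = rotTorus n t f X + rotTorus n t f Y :=
  sum_add_index' (fun p => by simp) fun p A A' => by rw [smul_add, single_add]

lemma rotTorus_sub (X Y : DT n) : rotTorus n t f (X - Y) = rotTorus n t f X - rotTorus n t f Y :=
  (AddMonoidHom.mk' _ rotTorus_add).map_sub X Y

lemma rotTorus_smul (c : ℂ) (X : DT n) : rotTorus n t f (c • X) = c • rotTorus n t f X := by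
  revert X
  refine congrFun (Finsupp.additive_ext (fun X Y => ?_) (fun X Y => ?_) fun p A => ?_)
  · rw [smul_add, rotTorus_add]
  · rw [rotTorus_add, smul_add]
  · rw [smul_single, rotTorus_single, rotTorus_single, smul_single, smul_comm]

lemma rotTorus_bijective (ht : t ≠ 0) (hf : f ≠ 0) : Function.Bijective (rotTorus n t f) := by
  let back : DT n → DT n := fun Y =>
    Y.sum fun q B => single (-q.2, q.1) ((rotCoeff t f (-q.2, q.1))⁻¹ • B)
  have back_single (q : ℤ × ℤ) (B : Matrix (Fin n) (Fin n) ℂ) :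
      back (single q B) = single (-q.2, q.1) ((rotCoeff t f (-q.2, q.1))⁻¹ • B) :=
    sum_single_index (by simp)
  have back_add (X Y : DT n) : back (X + Y) = back X + back Y :=
    sum_add_index' (fun p => by simp) fun p A A' => by rw [smul_add, single_add]
  refine Function.bijective_iff_has_inverse.2 ⟨back, congrFun ?_, congrFun ?_⟩
  · refine Finsupp.additive_ext (fun X Y => ?_) (fun X Y => rfl) fun p A => ?_
    · simp only [rotTorus_add, back_add]
    · simp only [rotTorus_single, back_single, neg_neg, smul_smul,
        inv_mul_cancel₀ (rotCoeff_ne_zero ht hf p), one_smul]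
  · refine Finsupp.additive_ext (fun X Y => ?_) (fun X Y => rfl) fun q B => ?_
    · simp only [rotTorus_add, back_add]
    · simp only [rotTorus_single, back_single, neg_neg, smul_smul,
        mul_inv_cancel₀ (rotCoeff_ne_zero ht hf _), one_smul]

lemma rotTorus_dmul (ht : t ≠ 0) (hf : f ≠ 0) (X Y : DT n) :
    rotTorus n t f (dmul n t X Y) = dmul n t (rotTorus n t f X) (rotTorus n t f Y) := by
  revert X Y
  refine congrFun₂ (Finsupp.biadditive_ext (fun X X' Y => ?_) (fun X Y Y' => ?_)
    (fun X X' Y => ?_) (fun X Y Y' => ?_) fun p q A B => ?_)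
  · rw [dmul_add_left, rotTorus_add]
  · rw [dmul_add_right, rotTorus_add]
  · rw [rotTorus_add, dmul_add_left]
  · rw [rotTorus_add, dmul_add_right]
  · rw [dmul_single_single, rotTorus_single, rotTorus_single, rotTorus_single,
      dmul_single_single, neg_add, smul_smul, Matrix.smul_mul, Matrix.mul_smul, smul_smul,
      smul_smul, rotCoeff_add_mul ht hf]

lemma tracePairing_rotTorus (ht : t ≠ 0) (hf : f ≠ 0) (w : ℤ × ℤ → ℂ) (X Y : DT n) :
    tracePairing n t w (rotTorus n t f X) (rotTorus n t f Y) =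
      tracePairing n t (fun p => w (p.2, -p.1)) X Y := by
  revert X Y
  refine congrFun₂ (Finsupp.biadditive_ext (fun X X' Y => ?_) (fun X Y Y' => ?_)
    (fun X X' Y => ?_) (fun X Y Y' => ?_) fun p q A B => ?_)
  · rw [rotTorus_add, tracePairing_add_left]
  · rw [rotTorus_add, tracePairing_add_right]
  · rw [tracePairing_add_left]
  · rw [tracePairing_add_right]
  · have rot_injective : Function.Injective fun x : ℤ × ℤ => (x.2, -x.1) := fun x y h => by
      simp only [Prod.mk.injEq, neg_inj] at h
      exact Prod.ext h.2 h.1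
    have hB : single (q.2, -q.1) (rotCoeff t f q • B) (-p.2, - -p.1) =
        single q (rotCoeff t f q • B) (-p.1, -p.2) :=
      single_apply_left rot_injective q (-p.1, -p.2) _
    rw [rotTorus_single, rotTorus_single, tracePairing_single_single, tracePairing_single_single, hB]
    by_cases hq : q = (-p.1, -p.2)
    · subst hq
      simp only [single_eq_same, Matrix.smul_mul, Matrix.mul_smul, Matrix.trace_smul, smul_eq_mul]
      linear_combination w (p.2, -p.1) * (A * B).trace * rotCoeff_mul_rotCoeff_neg ht hf p
    · simp only [single_eq_of_ne' hq, Matrix.trace_zero, mul_zero]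

end Rotation

section Miki

variable {n : ℕ} {d : ℂ}

lemma rotCoeff_zpow (hd : d ≠ 0) (p : ℤ × ℤ) :
    rotCoeff (d ^ (n : ℤ)) ((-d) ^ (n : ℤ)) p =
      d ^ (-(n : ℤ) * p.1) * (-d) ^ ((n : ℤ) * p.2) * (d ^ (n : ℤ)) ^ (p.1 * p.2) := by
  rw [rotCoeff, zpow_sub₀ (zpow_ne_zero _ hd)]
  simp only [neg_mul, zpow_neg, zpow_mul]
  field_simp

lemma miki_eq (hd : d ≠ 0) (u : DText n) :
    miki n d u = (rotTorus n (d ^ (n : ℤ)) ((-d) ^ (n : ℤ)) u.1, -u.2.2, u.2.1) := by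
  simp only [rotTorus, rotCoeff_zpow hd]
  rfl

end Miki

/-- The map `miki` is a Lie algebra automorphism of `𝔡̄_{d^n}^{(n)}`: it is linear,
bijective, sends `c¹ ↦ c²`, `c² ↦ −c¹`, and preserves the bracket. -/
theorem stmt11 (n : ℕ) (d : ℂ) (hd : d ≠ 0) :
    Function.Bijective (miki n d) ∧
    (∀ u v : DText n, miki n d (u + v) = miki n d u + miki n d v) ∧
    (∀ (c : ℂ) (u : DText n), miki n d (c • u) = c • miki n d u) ∧
    (∀ a b : ℂ, miki n d (0, a, b) = (0, -b, a)) ∧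
    (∀ u v : DText n,
      miki n d (extBr n (d ^ (n : ℤ)) u v) =
        extBr n (d ^ (n : ℤ)) (miki n d u) (miki n d v)) := by
  have ht : d ^ (n : ℤ) ≠ 0 := zpow_ne_zero _ hd
  have hf : (-d) ^ (n : ℤ) ≠ 0 := zpow_ne_zero _ (neg_ne_zero.2 hd)
  rw [show miki n d = _ from funext (miki_eq hd)]
  refine ⟨?_, fun u v => ?_, fun c u => ?_, fun a b => ?_, fun u v => ?_⟩
  · have hcentre : Function.Bijective fun c : ℂ × ℂ => (-c.2, c.1) :=
      Function.bijective_iff_has_inverse.2 ⟨fun c => (c.2, -c.1), fun c => by simp, fun c => by simp⟩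
    exact (rotTorus_bijective ht hf).prodMap hcentre
  · simp only [Prod.fst_add, Prod.snd_add, rotTorus_add, neg_add, Prod.mk_add_mk]
  · simp only [Prod.smul_fst, Prod.smul_snd, rotTorus_smul, smul_neg, Prod.smul_mk]
  · simp only [rotTorus_zero]
  · simp only [extBr, rotTorus_sub, rotTorus_dmul ht hf, phi1_eq_tracePairing, phi2_eq_tracePairing,
      tracePairing_rotTorus ht hf, Int.cast_neg, tracePairing_neg]
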